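/- Let b ≥ 2 and N ≥ 0 be integers, let n < b^N have base-b digits n_0, …, n_{N−1}. Let (p̄_k)_{k≥0} and (s̄_k)_{k≥0} be sequences of functions ℝ → ℝ satisfying both s̄_k(x+y) = Σ_{j=0}^{k} p̄_j(x)·s̄_{k−j}(y) and p̄_k(x+y) = Σ_{j=0}^{k} p̄_j(x)·p̄_{k−j}(y) for all k ≥ 0 and x, y ∈ ℝ. Then for all real x_0,…,x_{N−1}, y_0,…,y_{N−1}, z_0,…,z_{N−1}: ∏_{i=0}^{N−1} s̄_{n_i}(x_i + y_i + z_i) = Σ_{m ⪯_b n} Σ_{l ⪯_b m} ( ∏_{i=0}^{N−1} p̄_{l_i}(x_i) · ∏_{i=0}^{N−1} p̄_{m_i − l_i}(y_i) · ∏_{i=0}^{N−1} s̄_{n_i − m_i}(z_i) ), where the outer sum runs over all m digitally dominated by n in base b, the inner sum over all l digitally dominated by m, and l_i, m_i denote base-b digits. -/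

import Mathlib

open Finset


lemma digit_mod_pow (b N i n : ℕ) (hb : 0 < b) (hi : i < N) :
    n % b ^ N / b ^ i % b = n / b ^ i % b := by
  conv_rhs => rw [← Nat.div_add_mod n (b ^ N)]
  have h1 : b ^ N = b ^ i * b ^ (N - i) := by
    rw [← pow_add]; congr 1; omega
  rw [h1, mul_assoc, Nat.mul_add_div (pow_pos hb i)]
  have h2 : b ^ (N - i) = b * b ^ (N - i - 1) := by
    rw [← pow_succ']; congr 1; omega
  rw [h2, mul_assoc, Nat.mul_add_mod]

lemma key_digital (b : ℕ) (hb : 2 ≤ b) :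
    ∀ (N n : ℕ), n < b ^ N → ∀ f : ℕ → ℕ → ℝ,
    (∏ i ∈ range N, ∑ j ∈ range (n / b ^ i % b + 1), f i j) =
      ∑ m ∈ (range (b ^ N)).filter
          (fun m => ∀ i ∈ range N, m / b ^ i % b ≤ n / b ^ i % b),
        ∏ i ∈ range N, f i (m / b ^ i % b) := by
  intro N
  induction N with
  | zero =>
    intro n hn f
    simp only [pow_zero, Nat.lt_one_iff] at hn
    subst hn
    simp
  | succ N ih =>
    intro n hn f
    have hb0 : 0 < b := by omega
    have hbN : 0 < b ^ N := pow_pos hb0 N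
    have hq : n / b ^ N < b := Nat.div_lt_of_lt_mul (by rwa [← pow_succ])
    have hqm : n / b ^ N % b = n / b ^ N := Nat.mod_eq_of_lt hq
    have hr : n % b ^ N < b ^ N := Nat.mod_lt _ hbN
    have hdig : ∀ i < N, n % b ^ N / b ^ i % b = n / b ^ i % b :=
      fun i hi => digit_mod_pow b N i n hb0 hi
    rw [prod_range_succ]
    have hL : (∏ i ∈ range N, ∑ j ∈ range (n / b ^ i % b + 1), f i j) =
        ∑ m ∈ (range (b ^ N)).filter
            (fun m => ∀ i ∈ range N, m / b ^ i % b ≤ n % b ^ N / b ^ i % b),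
          ∏ i ∈ range N, f i (m / b ^ i % b) := by
      rw [← ih (n % b ^ N) hr f]
      exact prod_congr rfl fun i hi => by rw [hdig i (mem_range.1 hi)]
    rw [hL, hqm]
    refine Eq.symm ((sum_nbij'
        (t := (range (n / b ^ N + 1)) ×ˢ
          ((range (b ^ N)).filter
            (fun m => ∀ i ∈ range N, m / b ^ i % b ≤ n % b ^ N / b ^ i % b)))
        (g := fun dm => (∏ i ∈ range N, f i (dm.2 / b ^ i % b)) * f N dm.1)
        (fun m => (m / b ^ N, m % b ^ N))
        (fun dm => dm.1 * b ^ N + dm.2) ?_ ?_ ?_ ?_ ?_).trans ?_)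
    · -- forward membership
      intro m hm
      simp only [mem_filter, mem_range] at hm
      obtain ⟨hm1, hm2⟩ := hm
      have hmq : m / b ^ N < b := Nat.div_lt_of_lt_mul (by rwa [← pow_succ])
      simp only [mem_product, mem_range, mem_filter]
      refine ⟨?_, Nat.mod_lt _ hbN, ?_⟩
      · have := hm2 N (Nat.lt_succ_self N)
        rw [Nat.mod_eq_of_lt hmq, hqm] at this
        omega
      · intro i hi
        rw [digit_mod_pow b N i m hb0 hi, hdig i hi]
        exact hm2 i (Nat.lt_succ_of_lt hi)
    · -- backward membership
      rintro ⟨d, m⟩ hdm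
      simp only [mem_product, mem_range, mem_filter] at hdm
      obtain ⟨hd, hm, hcond⟩ := hdm
      have h1 : d + 1 ≤ b := by omega
      have h2 : (d + 1) * b ^ N ≤ b * b ^ N := Nat.mul_le_mul_right _ h1
      have h3 : d * b ^ N + m < (d + 1) * b ^ N := by
        rw [add_one_mul]; omega
      have hMlt : d * b ^ N + m < b ^ (N + 1) := by
        rw [pow_succ, mul_comm (b ^ N) b]; omega
      have hMmod : (d * b ^ N + m) % b ^ N = m := by
        rw [mul_comm d, Nat.mul_add_mod, Nat.mod_eq_of_lt hm]
      have hMdiv : (d * b ^ N + m) / b ^ N = d := by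
        rw [mul_comm d, Nat.mul_add_div hbN, Nat.div_eq_of_lt hm]; ring
      simp only [mem_filter, mem_range]
      refine ⟨hMlt, ?_⟩
      intro i hi
      rcases Nat.lt_succ_iff_lt_or_eq.1 hi with h | h
      · rw [← hdig i h, ← digit_mod_pow b N i (d * b ^ N + m) hb0 h, hMmod]
        exact hcond i h
      · subst h
        rw [hMdiv, hqm, Nat.mod_eq_of_lt (by omega)]
        omega
    · -- left inverse
      intro m hm
      simp only
      rw [mul_comm]
      exact Nat.div_add_mod m (b ^ N)
    · -- right inverse
      rintro ⟨d, m⟩ hdm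
      simp only [mem_product, mem_range, mem_filter] at hdm
      obtain ⟨hd, hm, -⟩ := hdm
      have hMmod : (d * b ^ N + m) % b ^ N = m := by
        rw [mul_comm d, Nat.mul_add_mod, Nat.mod_eq_of_lt hm]
      have hMdiv : (d * b ^ N + m) / b ^ N = d := by
        rw [mul_comm d, Nat.mul_add_div hbN, Nat.div_eq_of_lt hm]; ring
      simp [hMmod, hMdiv]
    · -- function agreement
      intro m hm
      simp only [mem_filter, mem_range] at hm
      obtain ⟨hm1, hm2⟩ := hm
      have hmq : m / b ^ N < b := Nat.div_lt_of_lt_mul (by rwa [← pow_succ])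
      show (∏ i ∈ range (N + 1), f i (m / b ^ i % b)) =
        (∏ i ∈ range N, f i (m % b ^ N / b ^ i % b)) * f N (m / b ^ N)
      rw [prod_range_succ, Nat.mod_eq_of_lt hmq]
      congr 1
      exact prod_congr rfl fun i hi => by
        rw [digit_mod_pow b N i m hb0 (mem_range.1 hi)]
    · -- product sum = product of sums
      rw [sum_product, mul_comm, sum_mul_sum]
      exact sum_congr rfl fun d _ => sum_congr rfl fun m _ => mul_comm _ _

/-- **Trinomial digital theorem for Sheffer sequences.**
If `s̄_k(x+y) = Σ_{j=0}^k p̄_j(x) s̄_{k-j}(y)` and `p̄_k(x+y) = Σ_{j=0}^k p̄_j(x) p̄_{k-j}(y)`,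
then for `n < b^N` with base-`b` digits `n_i = n / b^i % b`:
`∏_i s̄_{n_i}(x_i+y_i+z_i) = Σ_{m ⪯_b n} Σ_{l ⪯_b m}
  (∏_i p̄_{l_i}(x_i)) (∏_i p̄_{m_i-l_i}(y_i)) (∏_i s̄_{n_i-m_i}(z_i))`. -/
theorem trinomial_digital_theorem_sheffer
    (b N : ℕ) (hb : 2 ≤ b) (n : ℕ) (hn : n < b ^ N)
    (p s : ℕ → ℝ → ℝ)
    (hconvS : ∀ (k : ℕ) (x y : ℝ),
      s k (x + y) = ∑ j ∈ range (k + 1), p j x * s (k - j) y)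
    (hconvP : ∀ (k : ℕ) (x y : ℝ),
      p k (x + y) = ∑ j ∈ range (k + 1), p j x * p (k - j) y)
    (x y z : ℕ → ℝ) :
    ∏ i ∈ range N, s (n / b ^ i % b) (x i + y i + z i) =
      ∑ m ∈ (range (b ^ N)).filter
          (fun m => ∀ i ∈ range N, m / b ^ i % b ≤ n / b ^ i % b),
        ∑ l ∈ (range (b ^ N)).filter
            (fun l => ∀ i ∈ range N, l / b ^ i % b ≤ m / b ^ i % b),
          (∏ i ∈ range N, p (l / b ^ i % b) (x i)) *
            (∏ i ∈ range N, p (m / b ^ i % b - l / b ^ i % b) (y i)) *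
            ∏ i ∈ range N, s (n / b ^ i % b - m / b ^ i % b) (z i) := by
  have hpt : ∀ i, s (n / b ^ i % b) (x i + y i + z i)
      = ∑ j ∈ range (n / b ^ i % b + 1),
          (∑ l ∈ range (j + 1), p l (x i) * p (j - l) (y i)) *
            s (n / b ^ i % b - j) (z i) := by
    intro i
    rw [hconvS (n / b ^ i % b) (x i + y i) (z i)]
    exact sum_congr rfl fun j hj => by rw [hconvP]
  simp only [hpt]
  rw [key_digital b hb N n hn fun i j =>
    (∑ l ∈ range (j + 1), p l (x i) * p (j - l) (y i)) *
      s (n / b ^ i % b - j) (z i)]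
  refine sum_congr rfl fun m hm => ?_
  have hmlt : m < b ^ N := mem_range.1 (mem_filter.1 hm).1
  rw [prod_mul_distrib,
    key_digital b hb N m hmlt fun i l => p l (x i) * p (m / b ^ i % b - l) (y i),
    sum_mul]
  exact sum_congr rfl fun l hl => by rw [prod_mul_distrib]
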